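/- Every paving simplicial complex is a near-matroid, and every boolean representable simplicial complex of dimension at most 2 is a near-matroid. -/
import Mathlib


open scoped Classical

variable {V : Type*}

/-- A (finite) simplicial complex on vertex set `V`: all singletons are faces and
faces are closed under taking subsets. -/
def IsSimplicialComplex [DecidableEq V] (H : Set (Finset V)) : Prop :=
  (∀ v : V, {v} ∈ H) ∧ ∀ X ∈ H, ∀ Y ⊆ X, Y ∈ H

/-- `F` is a flat of the complex with faces `H`. -/
def IsFlat [DecidableEq V] (H : Set (Finset V)) (F : Finset V) : Prop :=
  ∀ I ∈ H, I ⊆ F → ∀ p ∉ F, insert p I ∈ H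

/-- `X` is a facet (maximal face) of `H`. -/
def IsFacet (H : Set (Finset V)) (X : Finset V) : Prop :=
  X ∈ H ∧ ∀ Y ∈ H, X ⊆ Y → Y = X

/-- The `k`-truncation of the family of faces `H`. -/
def trunc (H : Set (Finset V)) (k : ℕ) : Set (Finset V) :=
  {X ∈ H | X.card ≤ k}

/-- `H` has dimension `d`: some face has `d+1` elements and all faces have at most `d+1`. -/
def HasDim (H : Set (Finset V)) (d : ℕ) : Prop :=
  (∃ X ∈ H, X.card = d + 1) ∧ ∀ X ∈ H, X.card ≤ d + 1

/-- `H` is paving of dimension `d`: every `d`-subset is a face and the maximal face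
cardinality is `d+1`. -/
def PavingDim (H : Set (Finset V)) (d : ℕ) : Prop :=
  (∀ X : Finset V, X.card = d → X ∈ H) ∧ (∃ X ∈ H, X.card = d + 1) ∧
    ∀ X ∈ H, X.card ≤ d + 1

/-- `X` is a transversal of the successive differences for a chain
`C 0 ⊆ C 1 ⊆ … ⊆ C k` in the family `F`, i.e. `X` enumerates as `x 0, …, x (k-1)`
with `x i ∈ C (i+1) \ C i`. -/
def Transversal [DecidableEq V] (F : Set (Finset V)) (X : Finset V) : Prop :=
  ∃ (k : ℕ) (x : Fin k → V) (C : Fin (k + 1) → Finset V),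
    Function.Injective x ∧
    X = Finset.image x Finset.univ ∧
    (∀ i, C i ∈ F) ∧
    (∀ i : Fin k, C i.castSucc ⊆ C i.succ) ∧
    (∀ i : Fin k, x i ∈ C i.succ ∧ x i ∉ C i.castSucc)

/-- The set of all transversals of the successive differences for chains in `F`. -/
def Tr [DecidableEq V] (F : Set (Finset V)) : Set (Finset V) :=
  {X | Transversal F X}

/-- `H` is boolean representable: its faces are exactly the transversals of the
successive differences for chains in its lattice of flats. -/
def BooleanRepresentable [DecidableEq V] (H : Set (Finset V)) : Prop :=
  H = Tr {F | IsFlat H F}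

/-- The family `ε(S)` for a complex of dimension `d`. -/
def eps [DecidableEq V] (H : Set (Finset V)) (d : ℕ) : Set (Finset V) :=
  {X | ∀ Y ∈ H, Y ⊆ X → Y.card ≤ d → ∀ p ∉ X, insert p Y ∈ H}

/-- `H` is a truncated boolean representable simplicial complex. -/
def IsTBRSC [DecidableEq V] (H : Set (Finset V)) : Prop :=
  ∃ (H' : Set (Finset V)) (k : ℕ), 1 ≤ k ∧ IsSimplicialComplex H' ∧
    BooleanRepresentable H' ∧ H = trunc H' k

/-- The complex `B_d(V,L)`. -/
def Bd [DecidableEq V] (d : ℕ) (L : Finset V) : Set (Finset V) :=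
  {X | X.card ≤ d} ∪ {X | X.card = d + 1 ∧ (X ∩ L).card = d}

/-- The closure of `X`: the intersection of all flats containing `X`. -/
noncomputable def cl [Fintype V] [DecidableEq V] (H : Set (Finset V)) (X : Finset V) :
    Finset V :=
  Finset.univ.filter fun v => ∀ F : Finset V, IsFlat H F → X ⊆ F → v ∈ F

/-- `H` is a near-matroid. -/
def NearMatroid [Fintype V] [DecidableEq V] (H : Set (Finset V)) : Prop :=
  ∀ X ∈ H, ∀ Y ∈ H, cl H X = cl H Y → cl H X ≠ Finset.univ → X.card = Y.card

/-- `H` is a matroid: a simplicial complex with the exchange property. -/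
def IsMatroid [DecidableEq V] (H : Set (Finset V)) : Prop :=
  IsSimplicialComplex H ∧
    ∀ I ∈ H, ∀ J ∈ H, I.card = J.card + 1 → ∃ i ∈ I, i ∉ J ∧ insert i J ∈ H

/-! ### Auxiliary lemmas -/

section Aux

open Finset

variable [Fintype V] [DecidableEq V] {H : Set (Finset V)}

lemma mem_cl_iff {X : Finset V} {v : V} :
    v ∈ cl H X ↔ ∀ F : Finset V, IsFlat H F → X ⊆ F → v ∈ F := by
  simp [cl]

lemma subset_cl (H : Set (Finset V)) (X : Finset V) : X ⊆ cl H X :=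
  fun _ hv => mem_cl_iff.2 fun _ _ hXF => hXF hv

lemma cl_subset_flat {F X : Finset V} (hF : IsFlat H F) (hXF : X ⊆ F) : cl H X ⊆ F :=
  fun _ hv => mem_cl_iff.1 hv F hF hXF

lemma cl_mono {X Y : Finset V} (h : X ⊆ Y) : cl H X ⊆ cl H Y :=
  fun _ hv => mem_cl_iff.2 fun F hF hYF => mem_cl_iff.1 hv F hF (h.trans hYF)

lemma isFlat_univ (H : Set (Finset V)) : IsFlat H (Finset.univ : Finset V) := by
  intro I _ _ p hp
  exact absurd (Finset.mem_univ p) hp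

lemma isFlat_cl (H : Set (Finset V)) (X : Finset V) : IsFlat H (cl H X) := by
  intro I hI hIcl p hp
  rw [mem_cl_iff] at hp
  push_neg at hp
  obtain ⟨F, hF, hXF, hpF⟩ := hp
  exact hF I hI (hIcl.trans (cl_subset_flat hF hXF)) p hpF

lemma cl_empty_notMem (hS : IsSimplicialComplex H) (hBR : BooleanRepresentable H)
    (v : V) : v ∉ cl H ∅ := by
  intro hv
  have h1 : ({v} : Finset V) ∈ Tr {F | IsFlat H F} := hBR ▸ hS.1 v
  obtain ⟨k, x, C, hinj, himg, hFl, hchain, hx⟩ := h1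
  have hv' : v ∈ Finset.image x Finset.univ := himg ▸ Finset.mem_singleton_self v
  obtain ⟨i, -, hi⟩ := Finset.mem_image.1 hv'
  exact (hx i).2 (hi ▸ cl_subset_flat (hFl i.castSucc) (Finset.empty_subset _) hv)

lemma pair_elim (hBR : BooleanRepresentable H) {Y : Finset V} (hY : Y ∈ H)
    (hY2 : Y.card = 2) : ∃ s t : V, Y = {s, t} ∧ s ≠ t ∧ t ∉ cl H {s} := by
  have h1 : Y ∈ Tr {F | IsFlat H F} := hBR ▸ hY
  obtain ⟨k, x, C, hinj, himg, hFl, hchain, hx⟩ := h1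
  have hk : k = 2 := by
    have h2 : (Finset.image x Finset.univ).card = k := by
      rw [Finset.card_image_of_injective _ hinj, Finset.card_univ, Fintype.card_fin]
    rw [← himg, hY2] at h2
    omega
  subst hk
  refine ⟨x 0, x 1, ?_, fun h => absurd (hinj h) (by decide), ?_⟩
  · rw [himg]
    ext v
    simp only [Finset.mem_image, Finset.mem_univ, true_and, Fin.exists_fin_two,
      Finset.mem_insert, Finset.mem_singleton]
    constructor <;> rintro (h | h) <;> simp [h]
  · intro hc
    have h01 : (0 : Fin 2).succ = (1 : Fin 2).castSucc := rfl
    have hs1 : x 0 ∈ C ((1 : Fin 2).castSucc) := h01 ▸ (hx 0).1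
    refine (hx 1).2 (cl_subset_flat (hFl ((1 : Fin 2).castSucc)) ?_ hc)
    simpa using hs1

lemma pair_intro (hS : IsSimplicialComplex H) (hBR : BooleanRepresentable H)
    {a b : V} (hb : b ∉ cl H {a}) : insert b {a} ∈ H := by
  have hne : a ≠ b := fun h => hb (h ▸ subset_cl H {a} (Finset.mem_singleton_self a))
  rw [hBR]
  refine ⟨2, ![a, b], ![cl H ∅, cl H {a}, Finset.univ], ?_, ?_, ?_, ?_, ?_⟩
  · intro i j hij
    fin_cases i <;> fin_cases j <;> simp_all
  · ext v
    simp only [Finset.mem_image, Finset.mem_univ, true_and, Fin.exists_fin_two,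
      Matrix.cons_val_zero, Matrix.cons_val_one, Matrix.head_cons,
      Finset.mem_insert, Finset.mem_singleton]
    constructor <;> rintro (h | h) <;> simp [h]
  · intro i
    fin_cases i
    · exact isFlat_cl H ∅
    · exact isFlat_cl H {a}
    · exact isFlat_univ H
  · intro i
    fin_cases i
    · exact cl_mono (Finset.empty_subset _)
    · exact Finset.subset_univ _
  · intro i
    fin_cases i
    · exact ⟨subset_cl H {a} (Finset.mem_singleton_self a),
        cl_empty_notMem hS hBR a⟩
    · exact ⟨Finset.mem_univ b, hb⟩

/-- Core argument for the boolean representable case: the configuration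
`cl {x} = cl Y` with `Y` a 2-element face and proper closure is impossible. -/
lemma br_main (hS : IsSimplicialComplex H) (hBR : BooleanRepresentable H)
    (hdim : ∀ X ∈ H, X.card ≤ 3) {x : V} {Y : Finset V} (hY : Y ∈ H)
    (hY2 : Y.card = 2) (hcl : cl H {x} = cl H Y) (hne : cl H {x} ≠ Finset.univ) :
    False := by
  set F := cl H {x} with hF
  have hFflat : IsFlat H F := isFlat_cl H {x}
  have hYF : Y ⊆ F := hcl ▸ subset_cl H Y
  have hFne : F ≠ Finset.univ := hne
  obtain ⟨s, t, hYst, hst, hts⟩ := pair_elim hBR hY hY2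
  have hsF : s ∈ F := hYF (hYst ▸ Finset.mem_insert_self s {t})
  have htF : t ∈ F := hYF (hYst ▸ Finset.mem_insert_of_mem (Finset.mem_singleton_self t))
  -- no flat strictly between F and univ
  have key2 : ∀ K : Finset V, IsFlat H K → F ⊆ K → K ≠ Finset.univ → K = F := by
    intro K hK hFK hKuniv
    by_contra hKF
    have hss : F ⊂ K := hFK.ssubset_of_ne (Ne.symm hKF)
    obtain ⟨u, huK, huF⟩ := Finset.exists_of_ssubset hss
    obtain ⟨r, hr⟩ : ∃ r, r ∉ K := by
      by_contra h
      push_neg at h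
      exact hKuniv (Finset.eq_univ_iff_forall.2 h)
    have hJ : insert u Y ∈ H := hFflat Y hY hYF u huF
    have hJK : insert u Y ⊆ K := Finset.insert_subset huK (hYF.trans hFK)
    have hJ2 : insert r (insert u Y) ∈ H := hK _ hJ hJK r hr
    have hcard : (insert r (insert u Y)).card = 4 := by
      rw [Finset.card_insert_of_notMem (fun h => hr (hJK h)),
        Finset.card_insert_of_notMem (fun h => huF (hYF h)), hY2]
    have := hdim _ hJ2
    omega
  have key3 : ∀ (v : V) (K : Finset V), cl H {v} = F → IsFlat H K → v ∈ K →
      K = F ∨ K = Finset.univ := by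
    intro v K hv hK hvK
    have hFK : F ⊆ K := hv ▸ cl_subset_flat hK (Finset.singleton_subset_iff.2 hvK)
    by_cases h : K = Finset.univ
    · exact Or.inr h
    · exact Or.inl (key2 K hK hFK h)
  have key4 : ∀ u v : V, cl H {u} = F → v ∈ F → cl H {v} ≠ F → u ∉ cl H {v} := by
    intro u v hu hvF hvcl hmem
    rcases key3 u (cl H {v}) hu (isFlat_cl H {v}) hmem with h | h
    · exact hvcl h
    · have : cl H {v} ⊆ F := cl_subset_flat hFflat (Finset.singleton_subset_iff.2 hvF)
      exact hFne (Finset.eq_univ_iff_forall.2 fun w => this (h ▸ Finset.mem_univ w))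
  have key5 : ∀ u u' : V, cl H {u} = F → cl H {u'} = F → u ≠ u' →
      ({u, u'} : Finset V) ∉ H := by
    intro u u' hu hu' huu hmem
    have hc2 : ({u, u'} : Finset V).card = 2 := Finset.card_pair huu
    obtain ⟨s', t', hel, -, ht'⟩ := pair_elim hBR hmem hc2
    have hs'cl : cl H {s'} = F := by
      have : s' ∈ ({u, u'} : Finset V) := hel ▸ Finset.mem_insert_self s' {t'}
      rcases Finset.mem_insert.1 this with h | h
      · exact h ▸ hu
      · exact (Finset.mem_singleton.1 h) ▸ hu'
    have ht'cl : cl H {t'} = F := by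
      have : t' ∈ ({u, u'} : Finset V) :=
        hel ▸ Finset.mem_insert_of_mem (Finset.mem_singleton_self t')
      rcases Finset.mem_insert.1 this with h | h
      · exact h ▸ hu
      · exact (Finset.mem_singleton.1 h) ▸ hu'
    exact ht' (hs'cl ▸ ht'cl ▸ subset_cl H {t'} (Finset.mem_singleton_self t'))
  -- S is a flat
  set S : Finset V := F.filter (fun v => cl H {v} = F) with hSdef
  have key6 : IsFlat H S := by
    intro I hI hIS q hq
    have hcard : I.card ≤ 1 := by
      by_contra h
      push_neg at h
      obtain ⟨u, hu, u', hu', huu⟩ := Finset.one_lt_card.1 h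
      have huS := Finset.mem_filter.1 (hIS hu)
      have hu'S := Finset.mem_filter.1 (hIS hu')
      have hpair : ({u, u'} : Finset V) ∈ H :=
        hS.2 I hI _ (Finset.insert_subset hu (Finset.singleton_subset_iff.2 hu'))
      exact key5 u u' huS.2 hu'S.2 huu hpair
    interval_cases hIc : I.card
    · rw [Finset.card_eq_zero.1 hIc]
      simpa using hS.1 q
    · obtain ⟨u, rfl⟩ := Finset.card_eq_one.1 hIc
      have huS := Finset.mem_filter.1 (hIS (Finset.mem_singleton_self u))
      by_cases hqF : q ∈ F
      · have hqcl : cl H {q} ≠ F := fun h => hq (Finset.mem_filter.2 ⟨hqF, h⟩)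
        have huq : u ∉ cl H {q} := key4 u q huS.2 hqF hqcl
        have h2 : insert u {q} ∈ H := pair_intro hS hBR huq
        have : ({q, u} : Finset V) = ({u, q} : Finset V) := Finset.pair_comm q u
        rw [show insert q ({u} : Finset V) = ({q, u} : Finset V) from rfl, this]
        exact h2
      · have : q ∉ cl H {u} := huS.2 ▸ hqF
        exact pair_intro hS hBR this
  -- conclusion
  have hxS : x ∈ S := Finset.mem_filter.2
    ⟨subset_cl H {x} (Finset.mem_singleton_self x), rfl⟩
  have hFS : F ⊆ S := cl_subset_flat key6 (Finset.singleton_subset_iff.2 hxS)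
  have hsS : cl H {s} = F := (Finset.mem_filter.1 (hFS hsF)).2
  exact hts (hsS ▸ htF)

end Aux

theorem stmt_17 [Fintype V] [DecidableEq V] [Nonempty V] (H : Set (Finset V))
    (hS : IsSimplicialComplex H) :
    (∀ d : ℕ, PavingDim H d → NearMatroid H) ∧
    (BooleanRepresentable H → (∀ X ∈ H, X.card ≤ 3) → NearMatroid H) := by
  constructor
  · -- paving case
    intro d hP
    obtain ⟨hall, ⟨X₀, hX₀, hX₀c⟩, hbound⟩ := hP
    have hVcard : d + 1 ≤ Fintype.card V := by
      have := Finset.card_le_univ X₀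
      omega
    have hsub : ∀ W : Finset V, W.card ≤ d → W ∈ H := by
      intro W hW
      obtain ⟨W', hWW', hW'c⟩ := Finset.exists_superset_card_eq hW (by omega)
      exact hS.2 W' (hall W' hW'c) W hWW'
    have hsmallflat : ∀ Z : Finset V, Z.card + 1 ≤ d → IsFlat H Z := by
      intro Z hZ I hI hIZ p hp
      refine hsub _ ?_
      have h1 : I.card ≤ Z.card := Finset.card_le_card hIZ
      have h2 : (insert p I).card ≤ I.card + 1 := Finset.card_insert_le p I
      omega
    have hproper : ∀ W ∈ H, W ⊆ cl H W → cl H W ≠ Finset.univ → W.card ≤ d := by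
      intro W hW hWcl hWne
      obtain ⟨p, hp⟩ : ∃ p, p ∉ cl H W := by
        by_contra h
        push_neg at h
        exact hWne (Finset.eq_univ_iff_forall.2 h)
      have hins : insert p W ∈ H := isFlat_cl H W W hW hWcl p hp
      have hc : (insert p W).card = W.card + 1 :=
        Finset.card_insert_of_notMem (fun h => hp (hWcl h))
      have := hbound _ hins
      omega
    have aux : ∀ X ∈ H, ∀ Y ∈ H, cl H X = cl H Y → cl H X ≠ Finset.univ →
        X.card < Y.card → False := by
      intro X hX Y hY hXY hXne hlt
      have hXd : X.card ≤ d := hproper X hX (subset_cl H X) hXne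
      have hYd : Y.card ≤ d := hproper Y hY (subset_cl H Y) (hXY ▸ hXne)
      have hXflat : IsFlat H X := hsmallflat X (by omega)
      have hclX : cl H X ⊆ X := cl_subset_flat hXflat subset_rfl
      have hYX : Y ⊆ X := (subset_cl H Y).trans (hXY ▸ hclX)
      have := Finset.card_le_card hYX
      omega
    intro X hX Y hY hXY hXne
    rcases lt_trichotomy X.card Y.card with h | h | h
    · exact absurd (aux X hX Y hY hXY hXne h) (fun h => h)
    · exact h
    · exact absurd (aux Y hY X hX hXY.symm (hXY ▸ hXne) h) (fun h => h)
  · -- boolean representable case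
    intro hBR hdim
    have aux : ∀ X ∈ H, ∀ Y ∈ H, cl H X = cl H Y → cl H X ≠ Finset.univ →
        X.card < Y.card → False := by
      intro X hX Y hY hXY hXne hlt
      have hYcl : Y ⊆ cl H Y := subset_cl H Y
      obtain ⟨p, hp⟩ : ∃ p, p ∉ cl H Y := by
        by_contra h
        push_neg at h
        exact hXne (hXY ▸ Finset.eq_univ_iff_forall.2 h)
      have hins : insert p Y ∈ H := isFlat_cl H Y Y hY hYcl p hp
      have hYc : (insert p Y).card = Y.card + 1 :=
        Finset.card_insert_of_notMem (fun h => hp (hYcl h))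
      have hY2 : Y.card ≤ 2 := by
        have := hdim _ hins
        omega
      have hX1 : X.card ≤ 1 := by omega
      rcases Nat.lt_or_ge X.card 1 with hX0 | hX0
      · -- X = ∅
        have hXe : X = ∅ := Finset.card_eq_zero.1 (by omega)
        obtain ⟨c, hc⟩ := Finset.card_pos.1 (show 0 < Y.card by omega)
        have : c ∈ cl H ∅ := hXe ▸ hXY ▸ subset_cl H Y hc
        exact cl_empty_notMem hS hBR c this
      · -- X = {x}, Y has card 2
        have hXc : X.card = 1 := by omega
        have hYc2 : Y.card = 2 := by omega
        obtain ⟨x, rfl⟩ := Finset.card_eq_one.1 hXc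
        exact br_main hS hBR hdim hY hYc2 hXY hXne
    intro X hX Y hY hXY hXne
    rcases lt_trichotomy X.card Y.card with h | h | h
    · exact absurd (aux X hX Y hY hXY hXne h) (fun h => h)
    · exact h
    · exact absurd (aux Y hY X hX hXY.symm (hXY ▸ hXne) h) (fun h => h)
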